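/- Let X = [0,j]_ℤ × [0,k]_ℤ ⊆ ℤ² with c₁-adjacency, and let A = {(0,0),(0,k),(j,0),(j,k)} be the set of corners of X. Then (X,c₁) is (A,m,m)-limited for every m ∈ ℕ. -/

import Mathlib

/-- A function between digital images (graphs) is digitally continuous if adjacent
points map to equal or adjacent points. -/
def DigContinuous {V W : Type*} (G : SimpleGraph V) (H : SimpleGraph W) (f : V → W) : Prop :=
  ∀ x y : V, G.Adj x y → f x = f y ∨ H.Adj (f x) (f y)

/-- `f` restricted to `A` is an `m`-map: it moves each point of `A` a graph distance of at
most `m`. -/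
def IsMMapOn {V : Type*} (G : SimpleGraph V) (f : V → V) (A : Set V) (m : ℕ) : Prop :=
  ∀ a ∈ A, G.dist a (f a) ≤ m

/-- `A` is an `(m,n)`-limiting set for `(X,κ)`: every continuous self-map whose restriction
to `A` is an `m`-map is an `n`-map. -/
def IsLimiting {V : Type*} (G : SimpleGraph V) (A : Set V) (m n : ℕ) : Prop :=
  ∀ f : V → V, DigContinuous G G f → IsMMapOn G f A m → IsMMapOn G f Set.univ n

/-- `A` is a minimal `(m,n)`-limiting set: it is limiting and no proper subset is. -/
def IsMinimalLimiting {V : Type*} (G : SimpleGraph V) (A : Set V) (m n : ℕ) : Prop :=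
  IsLimiting G A m n ∧ ∀ B : Set V, B ⊂ A → ¬ IsLimiting G B m n

/-- The digital rectangle `[0,j]_ℤ × [0,k]_ℤ` with `c₁`-adjacency. -/
def rectC1 (j k : ℤ) : SimpleGraph (Set.Icc (0 : ℤ) j ×ˢ Set.Icc (0 : ℤ) k) where
  Adj p q := |(p : ℤ × ℤ).1 - (q : ℤ × ℤ).1| + |(p : ℤ × ℤ).2 - (q : ℤ × ℤ).2| = 1
  symm := by
    constructor
    intro p q h
    simpa [abs_sub_comm] using h
  loopless := by
    constructor
    intro p h
    simp at h

/-! The graph metric of the c₁-rectangle is the taxicab metric, and a continuous self-map `f`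
is 1-Lipschitz for it. If each corner `c` moves by at most `m`, then
`|f x - c|₁ ≤ |x - c|₁ + m` for all four corners. In the rectangle, the corners `(0,0)` and
`(j,k)` turn these into `|Δ(x₁ + x₂)| ≤ m`, the corners `(0,k)` and `(j,0)` into
`|Δ(x₁ - x₂)| ≤ m`, and `|a| + |b| = max |a + b| |a - b|` gives `|f x - x|₁ ≤ m`. -/

namespace SimpleGraph

variable {V : Type*} (G : SimpleGraph V)

variable {G} in
theorem exists_walk_length_eq_of_descent (d : V → V → ℕ)
    (hdescent : ∀ x y, 0 < d x y → ∃ x', G.Adj x x' ∧ d x' y + 1 = d x y)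
    (heq : ∀ x y, d x y = 0 → x = y) (x y : V) :
    ∃ w : G.Walk x y, w.length = d x y := by
  induction hn : d x y generalizing x with
  | zero => obtain rfl := heq x y hn; exact ⟨.nil, rfl⟩
  | succ n ih =>
    obtain ⟨x', hadj, hx'⟩ := hdescent x y (by omega)
    obtain ⟨w, hw⟩ := ih x' (by omega)
    exact ⟨.cons hadj w, by simp [hw]⟩

theorem dist_eq_of_descent (d : V → V → ℕ) (hself : ∀ x, d x x = 0)
    (hadj : ∀ x x' y, G.Adj x x' → d x y ≤ d x' y + 1)
    (hdescent : ∀ x y, 0 < d x y → ∃ x', G.Adj x x' ∧ d x' y + 1 = d x y)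
    (heq : ∀ x y, d x y = 0 → x = y) (x y : V) :
    G.dist x y = d x y := by
  have le_length : ∀ {x y : V} (w : G.Walk x y), d x y ≤ w.length := by
    intro x y w
    induction w with
    | nil => simp [hself]
    | cons h _ ih => simpa using (hadj _ _ _ h).trans (Nat.add_le_add_right ih 1)
  obtain ⟨w, hw⟩ := exists_walk_length_eq_of_descent d hdescent heq x y
  obtain ⟨w', hw'⟩ := Reachable.exists_walk_length_eq_dist ⟨w⟩
  exact le_antisymm (hw ▸ G.dist_le w) (hw' ▸ le_length w')

end SimpleGraph

section DigContinuous

variable {V W : Type*} {G : SimpleGraph V} {H : SimpleGraph W} {f : V → W}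

theorem DigContinuous.exists_walk_length_le (hf : DigContinuous G H f) {x y : V}
    (w : G.Walk x y) : ∃ w' : H.Walk (f x) (f y), w'.length ≤ w.length := by
  induction w with
  | nil => exact ⟨.nil, le_rfl⟩
  | @cons x x' y h _ ih =>
    obtain ⟨w', hw'⟩ := ih
    rcases hf x x' h with heq | hadj
    · exact ⟨w'.copy heq.symm rfl, by simp; omega⟩
    · exact ⟨.cons hadj w', by simpa using hw'⟩

theorem DigContinuous.dist_le (hf : DigContinuous G H f) {x y : V} (h : G.Reachable x y) :
    H.dist (f x) (f y) ≤ G.dist x y := by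
  obtain ⟨w, hw⟩ := h.exists_walk_length_eq_dist
  obtain ⟨w', hw'⟩ := hf.exists_walk_length_le w
  exact (H.dist_le w').trans (hw ▸ hw')

theorem DigContinuous.dist_apply_le {f : V → V} (hG : G.Preconnected) (hf : DigContinuous G G f)
    {a : V} {m : ℕ} (ha : G.dist a (f a) ≤ m) (x : V) :
    G.dist (f x) a ≤ G.dist x a + m :=
  calc G.dist (f x) a ≤ G.dist (f x) (f a) + G.dist (f a) a :=
        (hG (f x) (f a)).dist_triangle_left a
    _ ≤ G.dist x a + m := add_le_add (hf.dist_le (hG x a)) (G.dist_comm ▸ ha)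

end DigContinuous

def taxicab (p q : ℤ × ℤ) : ℕ := (p.1 - q.1).natAbs + (p.2 - q.2).natAbs

theorem taxicab_le_of_corners {j k : ℤ} {p u : ℤ × ℤ}
    (hp : p ∈ Set.Icc 0 j ×ˢ Set.Icc 0 k) (hu : u ∈ Set.Icc 0 j ×ˢ Set.Icc 0 k) {m : ℕ}
    (h : ∀ c ∈ ({(0, 0), (0, k), (j, 0), (j, k)} : Set (ℤ × ℤ)),
      taxicab u c ≤ taxicab p c + m) :
    taxicab p u ≤ m := by
  simp only [Set.mem_prod, Set.mem_Icc] at hp hu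
  have h₁ := h (0, 0) (by simp)
  have h₂ := h (0, k) (by simp)
  have h₃ := h (j, 0) (by simp)
  have h₄ := h (j, k) (by simp)
  simp only [taxicab] at h₁ h₂ h₃ h₄ ⊢
  omega

section Rectangle

variable {j k : ℤ}

theorem rectC1_adj_iff {p q : Set.Icc (0 : ℤ) j ×ˢ Set.Icc (0 : ℤ) k} :
    (rectC1 j k).Adj p q ↔ taxicab p q = 1 := by
  change |(p : ℤ × ℤ).1 - (q : ℤ × ℤ).1| + |(p : ℤ × ℤ).2 - (q : ℤ × ℤ).2| = 1 ↔ _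
  rw [Int.abs_eq_natAbs, Int.abs_eq_natAbs, taxicab]
  omega

theorem rectC1_exists_step (p q : Set.Icc (0 : ℤ) j ×ˢ Set.Icc (0 : ℤ) k)
    (h : 0 < taxicab p q) :
    ∃ p', (rectC1 j k).Adj p p' ∧ taxicab p' q + 1 = taxicab p q := by
  obtain ⟨⟨p₁, p₂⟩, hp⟩ := p
  obtain ⟨⟨q₁, q₂⟩, hq⟩ := q
  simp only [Set.mem_prod, Set.mem_Icc] at hp hq
  simp only [rectC1_adj_iff, taxicab] at h ⊢
  by_cases h₁ : p₁ = q₁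
  · refine ⟨⟨(p₁, if p₂ < q₂ then p₂ + 1 else p₂ - 1), ?_⟩, ?_⟩ <;>
      simp only [Set.mem_prod, Set.mem_Icc] <;> split_ifs <;> omega
  · refine ⟨⟨(if p₁ < q₁ then p₁ + 1 else p₁ - 1, p₂), ?_⟩, ?_⟩ <;>
      simp only [Set.mem_prod, Set.mem_Icc] <;> split_ifs <;> omega

theorem rectC1_taxicab_eq_zero {p q : Set.Icc (0 : ℤ) j ×ˢ Set.Icc (0 : ℤ) k}
    (h : taxicab p q = 0) : p = q := by
  simp only [taxicab] at h
  exact Subtype.ext (Prod.ext (by omega) (by omega))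

theorem rectC1_dist (p q : Set.Icc (0 : ℤ) j ×ˢ Set.Icc (0 : ℤ) k) :
    (rectC1 j k).dist p q = taxicab p q := by
  refine (rectC1 j k).dist_eq_of_descent (fun p q ↦ taxicab p q) (by simp [taxicab])
    (fun x x' y h ↦ ?_) rectC1_exists_step (fun _ _ ↦ rectC1_taxicab_eq_zero) p q
  have := rectC1_adj_iff.mp h
  simp only [taxicab] at this ⊢
  omega

theorem rectC1_preconnected : (rectC1 j k).Preconnected := fun p q ↦
  ⟨(SimpleGraph.exists_walk_length_eq_of_descent (G := rectC1 j k) (fun p q ↦ taxicab p q)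
    rectC1_exists_step (fun _ _ ↦ rectC1_taxicab_eq_zero) p q).choose⟩

end Rectangle

theorem stmt10 (j k : ℤ) (hj : 0 ≤ j) (hk : 0 ≤ k) (m : ℕ) :
    IsLimiting (rectC1 j k)
      {p | (p : ℤ × ℤ) = (0, 0) ∨ (p : ℤ × ℤ) = (0, k) ∨
           (p : ℤ × ℤ) = (j, 0) ∨ (p : ℤ × ℤ) = (j, k)} m m := by
  intro f hf hA x _
  rw [rectC1_dist]
  refine taxicab_le_of_corners x.2 (f x).2 fun c hc ↦ ?_
  have hcX : c ∈ Set.Icc 0 j ×ˢ Set.Icc 0 k := by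
    simp only [Set.mem_insert_iff, Set.mem_singleton_iff] at hc
    rcases hc with rfl | rfl | rfl | rfl <;> simp [hj, hk]
  have hcorner := hf.dist_apply_le rectC1_preconnected (hA ⟨c, hcX⟩ (by simpa using hc)) x
  simpa only [rectC1_dist] using hcorner
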